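/- Let T be a rigidly-compactly generated tensor triangulated category and let F ∈ T be a field object, i.e. for every t ∈ T the object t ⊗ F is a coproduct of suspensions of F. Then the localizing tensor ideal generated by F is minimal among nonzero localizing tensor ideals: if 0 ≠ t ∈ Locid(F), then Locid(t) = Locid(F). -/

import Mathlib

/-!
`Locid(t)` contains `F ⊗ t ≅ t ⊗ F ≅ ∐ᵢ F⟦nᵢ⟧`, and this coproduct has a summand because
`F ⊗ t ≠ 0`. A localizing subcategory contains every summand of each of its coproducts
(Eilenberg swindle), so some `F⟦n⟧`, hence `F`, lies in `Locid(t)`.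
-/

open CategoryTheory CategoryTheory.Limits CategoryTheory.Pretriangulated
open CategoryTheory.MonoidalCategory

universe v u

variable (C : Type u) [Category.{v} C] [Preadditive C] [HasZeroObject C] [HasShift C ℤ]
  [∀ n : ℤ, (shiftFunctor C n).Additive] [Pretriangulated C] [MonoidalCategory C]
  [SymmetricCategory C] [HasCoproducts.{v} C]

/-- A localizing tensor ideal. -/
structure IsLocTensorIdeal (S : Set C) : Prop where
  zero : ∀ t : C, IsZero t → t ∈ S
  iso_mem : ∀ {s t : C}, (s ≅ t) → s ∈ S → t ∈ S
  shift_mem : ∀ (t : C) (n : ℤ), t ∈ S → t⟦n⟧ ∈ S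
  ext : ∀ T : Triangle C, (T ∈ distTriang C) → T.obj₁ ∈ S → T.obj₂ ∈ S → T.obj₃ ∈ S
  coprod_mem : ∀ {ι : Type v} (f : ι → C) [HasCoproduct f], (∀ i, f i ∈ S) → (∐ f) ∈ S
  tensor_mem : ∀ (x t : C), t ∈ S → (x ⊗ t) ∈ S

/-- The localizing tensor ideal generated by a class of objects. -/
def Locid (S : Set C) : Set C := ⋂₀ {L | IsLocTensorIdeal C L ∧ S ⊆ L}

section Swindle

universe w

variable {D : Type*} [Category D] [HasZeroMorphisms D]

lemma nonempty_of_not_isZero_sigmaObj {ι : Type*} (f : ι → D) [HasCoproduct f]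
    (h : ¬ IsZero (∐ f)) : Nonempty ι := by
  by_contra hι
  exact h <| (IsZero.iff_id_eq_zero _).mpr <| Sigma.hom_ext _ _ fun i => (hι ⟨i⟩).elim

noncomputable def optionSigmaIso {J : Type*} (g : Option J → D) [HasCoproduct g]
    [HasCoproduct fun j => g (some j)] [HasBinaryBiproduct (g none) (∐ fun j => g (some j))] :
    (∐ g) ≅ g none ⊞ ∐ fun j => g (some j) where
  hom := Sigma.desc fun
    | none => biprod.inl
    | some j => Sigma.ι (fun j => g (some j)) j ≫ biprod.inr
  inv := biprod.desc (Sigma.ι g none) (Sigma.desc fun j => Sigma.ι g (some j))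
  hom_inv_id := by
    ext (_ | j) <;> simp
  inv_hom_id := by
    ext <;> simp

/-- The column `i₀` of `ℕ × ι` is shifted down by one to make room for `none`. -/
def swindleEquiv {ι : Type*} [DecidableEq ι] (i₀ : ι) :
    Option (Σ _ : ULift.{w} ℕ, ι) ≃ Σ _ : ULift.{w} ℕ, ι where
  toFun
    | none => ⟨⟨0⟩, i₀⟩
    | some p => ⟨⟨if p.2 = i₀ then p.1.down + 1 else p.1.down⟩, p.2⟩
  invFun
    | ⟨⟨0⟩, i⟩ => if i = i₀ then none else some ⟨⟨0⟩, i⟩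
    | ⟨⟨k + 1⟩, i⟩ => some ⟨⟨if i = i₀ then k else k + 1⟩, i⟩
  left_inv := by
    rintro (_ | ⟨⟨k⟩, i⟩)
    · simp
    · by_cases h : i = i₀ <;> rcases k with _ | k <;> simp [h]
  right_inv := by
    rintro ⟨⟨_ | k⟩, i⟩ <;> by_cases h : i = i₀ <;> simp [h]

noncomputable def swindleIso [HasCoproducts.{w} D] [HasBinaryBiproducts D] {ι : Type w}
    [DecidableEq ι] (f : ι → D) (i₀ : ι) :
    f i₀ ⊞ (∐ fun p : Σ _ : ULift.{w} ℕ, ι => f p.2) ≅ ∐ fun p : Σ _ : ULift.{w} ℕ, ι => f p.2 :=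
  (optionSigmaIso fun o : Option (Σ _ : ULift.{w} ℕ, ι) => o.elim (f i₀) fun p => f p.2).symm ≪≫
    Sigma.whiskerEquiv (swindleEquiv i₀) fun
      | none => Iso.refl _
      | some _ => Iso.refl _

end Swindle

variable {C}

section

omit [SymmetricCategory C] [HasCoproducts C]

lemma isLocTensorIdeal_locid (S : Set C) : IsLocTensorIdeal C (Locid C S) where
  zero t ht _ hL := hL.1.zero t ht
  iso_mem e hs _ hL := hL.1.iso_mem e (hs _ hL)
  shift_mem t n ht _ hL := hL.1.shift_mem t n (ht _ hL)
  ext T hT h₁ h₂ _ hL := hL.1.ext T hT (h₁ _ hL) (h₂ _ hL)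
  coprod_mem f _ hf _ hL := hL.1.coprod_mem f fun i => hf i _ hL
  tensor_mem x t ht _ hL := hL.1.tensor_mem x t (ht _ hL)

lemma subset_locid (S : Set C) : S ⊆ Locid C S := fun _ hx _ hL => hL.2 hx

lemma locid_singleton_subset_iff {L : Set C} (hL : IsLocTensorIdeal C L) (t : C) :
    Locid C {t} ⊆ L ↔ t ∈ L :=
  ⟨fun h => h (subset_locid {t} rfl),
    fun ht _ hx => hx L ⟨hL, Set.singleton_subset_iff.mpr ht⟩⟩

lemma IsLocTensorIdeal.mem_of_biprod_iso {L : Set C} (hL : IsLocTensorIdeal C L) {X Y : C}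
    (hY : Y ∈ L) (e : X ⊞ Y ≅ Y) : X ∈ L :=
  hL.ext _ (binaryBiproductTriangle_distinguished Y X) hY
    (hL.iso_mem (e.symm ≪≫ biprod.braiding X Y) hY)

lemma IsLocTensorIdeal.mem_of_sigma_mem [HasCoproducts.{v} C] {L : Set C}
    (hL : IsLocTensorIdeal C L) {ι : Type v} (f : ι → C) (hf : (∐ f) ∈ L) (i₀ : ι) : f i₀ ∈ L := by
  classical
  have hswindle : (∐ fun p : Σ _ : ULift.{v} ℕ, ι => f p.2) ∈ L :=
    hL.iso_mem (sigmaSigmaIso _ fun _ => f) (hL.coprod_mem _ fun _ => hf)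
  exact hL.mem_of_biprod_iso hswindle (swindleIso f i₀)

end

theorem statement8 (F : C)
    -- `F` is a field object:
    (hfield : ∀ t : C, ∃ (ι : Type v) (n : ι → ℤ),
      Nonempty (t ⊗ F ≅ ∐ fun i => F⟦n i⟧))
    -- `F ⊗ -` detects nonvanishing on `Locid(F)`:
    (hdetect : ∀ t ∈ Locid C {F}, ¬ IsZero t → ¬ IsZero (F ⊗ t)) :
    ∀ t ∈ Locid C {F}, ¬ IsZero t → Locid C {t} = Locid C {F} := by
  intro t ht ht₀
  have hL := isLocTensorIdeal_locid {t}
  obtain ⟨ι, n, ⟨e⟩⟩ := hfield t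
  have hFt : (∐ fun i => F⟦n i⟧) ∈ Locid C {t} :=
    hL.iso_mem (β_ F t ≪≫ e) (hL.tensor_mem F t (subset_locid {t} rfl))
  obtain ⟨i₀⟩ := nonempty_of_not_isZero_sigmaObj _ fun h =>
    hdetect t ht ht₀ (h.of_iso (β_ F t ≪≫ e))
  have hF : F ∈ Locid C {t} :=
    hL.iso_mem (shiftShiftNeg F (n i₀)) (hL.shift_mem _ _ (hL.mem_of_sigma_mem _ hFt i₀))
  exact ((locid_singleton_subset_iff (isLocTensorIdeal_locid {F}) t).mpr ht).antisymm
    ((locid_singleton_subset_iff hL F).mpr hF)
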